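/- Let T be a nonnegative tensor, σ a shape partition of T with d blocks, p ∈ (1,∞)^d, and let x = (x_1,…,x_d) with each x_i ∈ ℝ_+^{n_i} nonzero. Then the following are equivalent: (a) the normalized tuple (x_1/‖x_1‖_{p_1},…,x_d/‖x_d‖_{p_d}) is a (σ,p)-eigenvector of T; (b) there exists θ ∈ ℝ_+^d such that F^{(σ,p)}_i(x) = θ_i x_i for all i ∈ {1,…,d}. Moreover, if ‖x_i‖_{p_i} = 1 for all i, then: (c) if F^{(σ,p)}_i(x) = θ_i x_i for all i, there exists λ ≥ 0 with θ_i = λ^{p_i'−1} for all i and (λ, x) is a (σ,p)-eigenpair of T; and (d) if (λ, x) is a (σ,p)-eigenpair of T, then F^{(σ,p)}_i(x) = λ^{p_i'−1} x_i for all i. -/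

import Mathlib

open scoped BigOperators

namespace TensorPF

/-- A shape partition of the dimension vector `N : Fin m → ℕ` into `d` blocks.
`β` assigns to each index position its block, `rep i` is the minimal element `s_i`
of block `i`, and all positions in a block carry the same dimension. -/
structure ShapePartition (m d : ℕ) (N : Fin m → ℕ) where
  β : Fin m → Fin d
  surj : Function.Surjective β
  rep : Fin d → Fin m
  rep_mem : ∀ i, β (rep i) = i
  rep_min : ∀ (i : Fin d) (j : Fin m), β j = i → rep i ≤ j
  dim_eq : ∀ j j' : Fin m, β j = β j' → N j = N j'

namespace ShapePartition

variable {m d : ℕ} {N : Fin m → ℕ}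

/-- `n i = N (s_i)`, the common dimension of block `i`. -/
def n (σ : ShapePartition m d N) (i : Fin d) : ℕ := N (σ.rep i)

/-- `ν i = |σ_i|`, the size of block `i`. -/
def ν (σ : ShapePartition m d N) (i : Fin d) : ℕ :=
  (Finset.univ.filter (fun k => σ.β k = i)).card

theorem dim_n (σ : ShapePartition m d N) (k : Fin m) : N k = σ.n (σ.β k) :=
  σ.dim_eq k (σ.rep (σ.β k)) (σ.rep_mem (σ.β k)).symm

/-- `x^[σ]` : the `m`-tuple of vectors whose `k`-th component is `x (β k)`. -/
def blowup (σ : ShapePartition m d N) (x : ∀ i, Fin (σ.n i) → ℝ) :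
    ∀ k, Fin (N k) → ℝ :=
  fun k t => x (σ.β k) (Fin.cast (σ.dim_n k) t)

end ShapePartition

/-- The multilinear form `f_T(z) = Σ_J T_J ∏_k z_{k, J k}`. -/
def mform {m : ℕ} {N : Fin m → ℕ} (T : (∀ k, Fin (N k)) → ℝ)
    (z : ∀ k, Fin (N k) → ℝ) : ℝ :=
  ∑ J : ∀ k, Fin (N k), T J * ∏ k, z k (J k)

/-- `𝒯_{k,j}(z)`, the partial derivative of `f_T` with respect to `z_{k,j}`. -/
def tmap {m : ℕ} {N : Fin m → ℕ} (T : (∀ k, Fin (N k)) → ℝ)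
    (k : Fin m) (j : Fin (N k)) (z : ∀ l, Fin (N l) → ℝ) : ℝ :=
  ∑ J : ∀ l, Fin (N l),
    if J k = j then T J * ∏ l ∈ Finset.univ.erase k, z l (J l) else 0

/-- The `ℓ^q` norm of a vector. -/
noncomputable def pnorm {n : ℕ} (q : ℝ) (v : Fin n → ℝ) : ℝ :=
  (∑ j, |v j| ^ q) ^ (1 / q)

/-- `ψ_q(v)_j = |v_j|^{q-2} v_j`. -/
noncomputable def psi {n : ℕ} (q : ℝ) (v : Fin n → ℝ) : Fin n → ℝ :=
  fun j => |v j| ^ (q - 2) * v j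

/-- Spectral radius of a real matrix: the supremum of the moduli of its
complex eigenvalues. -/
noncomputable def rho {d : ℕ} (A : Matrix (Fin d) (Fin d) ℝ) : ℝ :=
  sSup {r : ℝ | ∃ μ : ℂ, μ ∈ spectrum ℂ (A.map (fun t : ℝ => (t : ℂ))) ∧ r = ‖μ‖}

/-- Hilbert projective (semi-)metric on positive vectors. -/
noncomputable def hilbertDist {n : ℕ} (u v : Fin n → ℝ) : ℝ :=
  Real.log ((⨆ j, u j / v j) * (⨆ j, v j / u j))

namespace ShapePartition

variable {m d : ℕ} {N : Fin m → ℕ}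

/-- The matrix `M` of Definition 2.5: the Jacobian of `x ↦ 𝒯_{s_i,t}(x^[σ])`
evaluated at the all-ones tuple. -/
noncomputable def Mmat (σ : ShapePartition m d N) (T : (∀ k, Fin (N k)) → ℝ) :
    (Σ i, Fin (σ.n i)) → (Σ i, Fin (σ.n i)) → ℝ :=
  fun a b =>
    fderiv ℝ (fun x : ∀ i, Fin (σ.n i) → ℝ => tmap T (σ.rep a.1) a.2 (σ.blowup x))
      (fun _ _ => (1 : ℝ)) (Pi.single b.1 (Pi.single b.2 1))

/-- `T` is σ-strictly nonnegative: every row of `M` has a nonzero entry. -/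
def StrictlyNonneg (σ : ShapePartition m d N) (T : (∀ k, Fin (N k)) → ℝ) : Prop :=
  ∀ a : Σ i, Fin (σ.n i), ∃ b : Σ i, Fin (σ.n i), σ.Mmat T a b ≠ 0

/-- `T` is σ-weakly irreducible: the matrix `M` is irreducible, i.e. the digraph
with an edge `a → b` whenever `M a b > 0` is strongly connected. -/
def WeaklyIrreducible (σ : ShapePartition m d N) (T : (∀ k, Fin (N k)) → ℝ) : Prop :=
  ∀ a b : Σ i, Fin (σ.n i),
    Relation.TransGen (fun a b : Σ i, Fin (σ.n i) => 0 < σ.Mmat T a b) a b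

/-- `T` is σ-strongly irreducible. -/
def StronglyIrreducible (σ : ShapePartition m d N) (T : (∀ k, Fin (N k)) → ℝ) : Prop :=
  ∀ x : ∀ i, Fin (σ.n i) → ℝ, (∀ i j, 0 ≤ x i j) → (∀ i, x i ≠ 0) →
    ¬ (∀ i j, 0 < x i j) →
    ∃ (k : Fin d) (l : Fin (σ.n k)), x k l = 0 ∧ 0 < tmap T (σ.rep k) l (σ.blowup x)

/-- `T` is σ-symmetric: invariant under all block-preserving permutations
of the index positions. -/
def PartSymmetric (σ : ShapePartition m d N) (T : (∀ k, Fin (N k)) → ℝ) : Prop :=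
  ∀ (π : Equiv.Perm (Fin m)) (hπ : ∀ k, σ.β (π k) = σ.β k) (J : ∀ k, Fin (N k)),
    T (fun k => Fin.cast (σ.dim_eq (π k) k (hπ k)) (J (π k))) = T J

/-- `(lam, x)` is a `(σ,p)`-eigenpair of `T`. -/
noncomputable def IsEigenpair (σ : ShapePartition m d N) (T : (∀ k, Fin (N k)) → ℝ)
    (p : Fin d → ℝ) (lam : ℝ) (x : ∀ i, Fin (σ.n i) → ℝ) : Prop :=
  (∀ i, pnorm (p i) (x i) = 1) ∧
  ∀ (i : Fin d) (j : Fin (σ.n i)),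
    tmap T (σ.rep i) j (σ.blowup x) = lam * psi (p i) (x i) j

/-- The `(σ,p)`-spectral radius `r^{(σ,p)}(T)`. -/
noncomputable def specRad (σ : ShapePartition m d N) (T : (∀ k, Fin (N k)) → ℝ)
    (p : Fin d → ℝ) : ℝ :=
  sSup {r : ℝ | ∃ lam x, σ.IsEigenpair T p lam x ∧ r = |lam|}

/-- The homogeneity matrix `A(σ,p) = diag(p₁'-1,…,p_d'-1)(ν 1ᵀ - I)`. -/
noncomputable def Amat (σ : ShapePartition m d N) (p : Fin d → ℝ) :
    Matrix (Fin d) (Fin d) ℝ :=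
  Matrix.of fun i j => (p i / (p i - 1) - 1) * ((σ.ν i : ℝ) - if i = j then 1 else 0)

/-- The multi-homogeneous map `F^{(σ,p)}`. -/
noncomputable def Fmap (σ : ShapePartition m d N) (T : (∀ k, Fin (N k)) → ℝ)
    (p : Fin d → ℝ) (x : ∀ i, Fin (σ.n i) → ℝ) : ∀ i, Fin (σ.n i) → ℝ :=
  fun i j => (tmap T (σ.rep i) j (σ.blowup x)) ^ (p i / (p i - 1) - 1)

/-- The map `G^{(σ,p)}_{i,j}(x) = sqrt(x_{i,j} F^{(σ,p)}_{i,j}(x))`. -/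
noncomputable def Gmap (σ : ShapePartition m d N) (T : (∀ k, Fin (N k)) → ℝ)
    (p : Fin d → ℝ) (x : ∀ i, Fin (σ.n i) → ℝ) : ∀ i, Fin (σ.n i) → ℝ :=
  fun i j => Real.sqrt (x i j * σ.Fmap T p x i j)

/-- The upper Collatz–Wielandt function `čw`. -/
noncomputable def cwMax (σ : ShapePartition m d N) (b : Fin d → ℝ) (γ : ℝ)
    (H x : ∀ i, Fin (σ.n i) → ℝ) : ℝ :=
  ∏ i, (⨆ j : Fin (σ.n i), H i j / x i j) ^ ((γ - 1) * b i)

/-- The lower Collatz–Wielandt function `ĉw`. -/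
noncomputable def cwMin (σ : ShapePartition m d N) (b : Fin d → ℝ) (γ : ℝ)
    (H x : ∀ i, Fin (σ.n i) → ℝ) : ℝ :=
  ∏ i, (⨅ j ∈ {j : Fin (σ.n i) | 0 < x i j}, H i j / x i j) ^ ((γ - 1) * b i)

/-- The weighted Hilbert metric `μ_b`. -/
noncomputable def muB (σ : ShapePartition m d N) (b : Fin d → ℝ)
    (x y : ∀ i, Fin (σ.n i) → ℝ) : ℝ :=
  ∑ i, b i * hilbertDist (x i) (y i)

/-- The Rayleigh quotient `Φ`. -/
noncomputable def rayleigh (σ : ShapePartition m d N) (T : (∀ k, Fin (N k)) → ℝ)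
    (p : Fin d → ℝ) (x : ∀ i, Fin (σ.n i) → ℝ) : ℝ :=
  mform T (σ.blowup x) / ∏ i, pnorm (p i) (x i) ^ (σ.ν i)

/-- The tensor norm `‖T‖_{(σ,p)}`. -/
noncomputable def tnorm (σ : ShapePartition m d N) (T : (∀ k, Fin (N k)) → ℝ)
    (p : Fin d → ℝ) : ℝ :=
  sSup {r : ℝ | ∃ x : ∀ i, Fin (σ.n i) → ℝ, (∀ i, x i ≠ 0) ∧ r = |σ.rayleigh T p x|}

end ShapePartition


/-!
Since `p' - 1 = (p - 1)⁻¹`, for nonnegative `x` the equation `F_i(x) = θ_i x_i` says exactly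
that `𝒯_{s_i,·}(x^[σ]) = θ_i^{p_i - 1} ψ_{p_i}(x_i)`. When `‖x_i‖_{p_i} = 1`, Euler's identity
`Σ_j x_{i,j} 𝒯_{s_i,j}(x^[σ]) = f_T(x^[σ])` forces `θ_i^{p_i - 1} = f_T(x^[σ])` for every `i`,
which is therefore the common eigenvalue. The general case reduces to the normalized one because
`F` is multi-homogeneous: rescaling each `x_i` by a positive constant rescales each `F_i` by a
positive constant, which preserves the existence of a nonnegative `θ`.
-/

theorem sum_mul_tmap_eq_mform {m : ℕ} {N : Fin m → ℕ} (T : (∀ k, Fin (N k)) → ℝ)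
    (k : Fin m) (z : ∀ l, Fin (N l) → ℝ) :
    ∑ j, z k j * tmap T k j z = mform T z := by
  unfold tmap mform
  simp only [Finset.mul_sum, mul_ite, mul_zero]
  rw [Finset.sum_comm]
  refine Finset.sum_congr rfl fun J _ => ?_
  rw [Finset.sum_ite_eq, if_pos (Finset.mem_univ _),
    ← Finset.mul_prod_erase Finset.univ (fun l => z l (J l)) (Finset.mem_univ k)]
  ring

theorem mform_nonneg {m : ℕ} {N : Fin m → ℕ} {T : (∀ k, Fin (N k)) → ℝ}
    (hT : ∀ J, 0 ≤ T J) {z : ∀ l, Fin (N l) → ℝ} (hz : ∀ l t, 0 ≤ z l t) :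
    0 ≤ mform T z :=
  Finset.sum_nonneg fun J _ => mul_nonneg (hT J) (Finset.prod_nonneg fun l _ => hz l (J l))

theorem tmap_nonneg {m : ℕ} {N : Fin m → ℕ} {T : (∀ k, Fin (N k)) → ℝ}
    (hT : ∀ J, 0 ≤ T J) (k : Fin m) (j : Fin (N k)) {z : ∀ l, Fin (N l) → ℝ}
    (hz : ∀ l t, 0 ≤ z l t) : 0 ≤ tmap T k j z :=
  Finset.sum_nonneg fun J _ => by
    split_ifs
    exacts [mul_nonneg (hT J) (Finset.prod_nonneg fun l _ => hz l (J l)), le_rfl]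

theorem tmap_smul {m : ℕ} {N : Fin m → ℕ} (T : (∀ k, Fin (N k)) → ℝ)
    (k : Fin m) (j : Fin (N k)) (a : Fin m → ℝ) (z : ∀ l, Fin (N l) → ℝ) :
    tmap T k j (fun l t => a l * z l t) = (∏ l ∈ Finset.univ.erase k, a l) * tmap T k j z := by
  unfold tmap
  rw [Finset.mul_sum]
  refine Finset.sum_congr rfl fun J _ => ?_
  split_ifs
  · rw [Finset.prod_mul_distrib]
    ring
  · ring

theorem psi_apply_of_nonneg {n : ℕ} {q : ℝ} (hq : q ≠ 1) {v : Fin n → ℝ} (hv : ∀ j, 0 ≤ v j)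
    (j : Fin n) : psi q v j = v j ^ (q - 1) := by
  unfold psi
  rcases (hv j).eq_or_lt with h | h
  · rw [← h, mul_zero, Real.zero_rpow (sub_ne_zero.mpr hq)]
  · rw [abs_of_pos h, ← Real.rpow_add_one h.ne']
    ring_nf

theorem pnorm_pos {n : ℕ} {q : ℝ} {v : Fin n → ℝ} (hv : v ≠ 0) : 0 < pnorm q v := by
  obtain ⟨j, hj⟩ := Function.ne_iff.mp hv
  refine Real.rpow_pos_of_pos (Finset.sum_pos' (fun t _ => by positivity) ⟨j, ?_, ?_⟩) _
  · exact Finset.mem_univ j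
  · exact Real.rpow_pos_of_pos (abs_pos.mpr hj) q

theorem pnorm_rpow {n : ℕ} {q : ℝ} (hq : q ≠ 0) (v : Fin n → ℝ) :
    pnorm q v ^ q = ∑ j, |v j| ^ q := by
  rw [pnorm, one_div, Real.rpow_inv_rpow (by positivity) hq]

theorem pnorm_div_pnorm {n : ℕ} {q : ℝ} (hq : q ≠ 0) {v : Fin n → ℝ} (hv : v ≠ 0) :
    pnorm q (fun j => v j / pnorm q v) = 1 := by
  have hc := pnorm_pos (q := q) hv
  have hsum : ∑ j, |v j / pnorm q v| ^ q = 1 := by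
    simp_rw [abs_div, abs_of_pos hc, Real.div_rpow (abs_nonneg _) hc.le]
    rw [← Finset.sum_div, ← pnorm_rpow hq v, div_self (by positivity)]
  rw [pnorm, hsum, Real.one_rpow]

theorem div_sub_one_sub_one_eq_inv {p : ℝ} (hp : p ≠ 1) : p / (p - 1) - 1 = (p - 1)⁻¹ := by
  have : p - 1 ≠ 0 := sub_ne_zero.mpr hp
  field_simp
  ring

theorem exists_nonneg_eq_mul_iff_of_rescale {ι : Type*} {κ : ι → Type*}
    {F G x y : ∀ i, κ i → ℝ} {a c : ι → ℝ} (ha : ∀ i, 0 < a i) (hc : ∀ i, 0 < c i)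
    (hF : ∀ i j, F i j = a i * G i j) (hx : ∀ i j, x i j = c i * y i j) :
    (∃ θ : ι → ℝ, (∀ i, 0 ≤ θ i) ∧ ∀ i j, F i j = θ i * x i j) ↔
      ∃ θ : ι → ℝ, (∀ i, 0 ≤ θ i) ∧ ∀ i j, G i j = θ i * y i j := by
  constructor
  · rintro ⟨θ, hθ, h⟩
    refine ⟨fun i => θ i * c i / a i,
      fun i => div_nonneg (mul_nonneg (hθ i) (hc i).le) (ha i).le, fun i j => ?_⟩
    have := h i j
    rw [hF, hx] at this
    field_simp [(ha i).ne']
    linarith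
  · rintro ⟨θ, hθ, h⟩
    refine ⟨fun i => θ i * a i / c i,
      fun i => div_nonneg (mul_nonneg (hθ i) (ha i).le) (hc i).le, fun i j => ?_⟩
    rw [hF, hx, h]
    field_simp [(hc i).ne']

namespace ShapePartition

variable {m d : ℕ} {N : Fin m → ℕ} (σ : ShapePartition m d N)

theorem blowup_rep (x : ∀ i, Fin (σ.n i) → ℝ) (i : Fin d) (j : Fin (σ.n i)) :
    σ.blowup x (σ.rep i) j = x i j := by
  unfold blowup
  generalize σ.dim_n (σ.rep i) = h
  revert h
  rw [σ.rep_mem i]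
  exact fun _ => rfl

theorem blowup_nonneg {x : ∀ i, Fin (σ.n i) → ℝ} (hx : ∀ i j, 0 ≤ x i j) (k : Fin m)
    (t : Fin (N k)) : 0 ≤ σ.blowup x k t :=
  hx _ _

variable {σ} {T : (∀ k, Fin (N k)) → ℝ} {p : Fin d → ℝ} {x : ∀ i, Fin (σ.n i) → ℝ}

theorem Fmap_smul (hT : ∀ J, 0 ≤ T J) {c : Fin d → ℝ} (hc : ∀ i, 0 ≤ c i)
    (hx : ∀ i j, 0 ≤ x i j) (i : Fin d) (j : Fin (σ.n i)) :
    σ.Fmap T p (fun i j => c i * x i j) i j =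
      (∏ l ∈ Finset.univ.erase (σ.rep i), c (σ.β l)) ^ (p i / (p i - 1) - 1) *
        σ.Fmap T p x i j := by
  have hblowup : σ.blowup (fun i j => c i * x i j) = fun k t => c (σ.β k) * σ.blowup x k t :=
    rfl
  simp only [Fmap]
  rw [hblowup, tmap_smul T (σ.rep i) j, Real.mul_rpow (Finset.prod_nonneg fun l _ => hc _)
    (tmap_nonneg hT (σ.rep i) j (σ.blowup_nonneg hx))]

theorem Fmap_eq_mul_iff (hT : ∀ J, 0 ≤ T J) (hx : ∀ i j, 0 ≤ x i j) {i : Fin d}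
    (hp : p i ≠ 1) (j : Fin (σ.n i)) {θ : ℝ} (hθ : 0 ≤ θ) :
    σ.Fmap T p x i j = θ * x i j ↔
      tmap T (σ.rep i) j (σ.blowup x) = θ ^ (p i - 1) * x i j ^ (p i - 1) := by
  simp only [Fmap]
  rw [div_sub_one_sub_one_eq_inv hp,
    Real.rpow_inv_eq (tmap_nonneg hT (σ.rep i) j (σ.blowup_nonneg hx)) (mul_nonneg hθ (hx i j))
      (sub_ne_zero.mpr hp),
    Real.mul_rpow hθ (hx i j)]

theorem eq_mform_of_tmap_eq (hx : ∀ i j, 0 ≤ x i j) {i : Fin d} (hp : p i ≠ 0)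
    (hn : pnorm (p i) (x i) = 1) {μ : ℝ}
    (h : ∀ j : Fin (σ.n i), tmap T (σ.rep i) j (σ.blowup x) = μ * x i j ^ (p i - 1)) :
    μ = mform T (σ.blowup x) := by
  have hpow (t : ℝ) (ht : 0 ≤ t) : t ^ p i = t * t ^ (p i - 1) := by
    rw [← Real.rpow_one_add' ht (by rwa [add_sub_cancel])]
    ring_nf
  calc μ = μ * pnorm (p i) (x i) ^ p i := by rw [hn, Real.one_rpow, mul_one]
    _ = ∑ j, σ.blowup x (σ.rep i) j * tmap T (σ.rep i) j (σ.blowup x) := by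
      rw [pnorm_rpow hp, Finset.mul_sum]
      refine Finset.sum_congr rfl fun j _ => ?_
      rw [blowup_rep, h, abs_of_nonneg (hx i j), hpow _ (hx i j)]
      ring
    _ = mform T (σ.blowup x) := sum_mul_tmap_eq_mform T _ _

theorem IsEigenpair.eigenvalue_nonneg (hT : ∀ J, 0 ≤ T J) (hx : ∀ i j, 0 ≤ x i j) {lam : ℝ}
    (h : σ.IsEigenpair T p lam x) {i : Fin d} (hp : 1 < p i) : 0 ≤ lam := by
  have hlam : lam = mform T (σ.blowup x) :=
    eq_mform_of_tmap_eq hx (zero_lt_one.trans hp).ne' (h.1 i) fun j => by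
      rw [h.2, psi_apply_of_nonneg hp.ne' (hx i)]
  exact hlam ▸ mform_nonneg hT (σ.blowup_nonneg hx)

theorem exists_isEigenpair_of_Fmap_eq (hT : ∀ J, 0 ≤ T J) (hp : ∀ i, 1 < p i)
    (hx : ∀ i j, 0 ≤ x i j) (hn : ∀ i, pnorm (p i) (x i) = 1) {θ : Fin d → ℝ}
    (hθ : ∀ i, 0 ≤ θ i) (hF : ∀ i j, σ.Fmap T p x i j = θ i * x i j) :
    ∃ lam, 0 ≤ lam ∧ (∀ i, θ i = lam ^ (p i / (p i - 1) - 1)) ∧ σ.IsEigenpair T p lam x := by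
  have htmap i j := (Fmap_eq_mul_iff hT hx (hp i).ne' j (hθ i)).mp (hF i j)
  have hθ_pow i : θ i ^ (p i - 1) = mform T (σ.blowup x) :=
    eq_mform_of_tmap_eq hx (zero_lt_one.trans (hp i)).ne' (hn i) (htmap i)
  refine ⟨_, mform_nonneg hT (σ.blowup_nonneg hx), fun i => ?_, hn, fun i j => ?_⟩
  · rw [div_sub_one_sub_one_eq_inv (hp i).ne', ← hθ_pow i,
      Real.rpow_rpow_inv (hθ i) (sub_ne_zero.mpr (hp i).ne')]
  · rw [psi_apply_of_nonneg (hp i).ne' (hx i), htmap, hθ_pow]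

theorem Fmap_eq_of_isEigenpair (hT : ∀ J, 0 ≤ T J) (hp : ∀ i, 1 < p i)
    (hx : ∀ i j, 0 ≤ x i j) {lam : ℝ} (h : σ.IsEigenpair T p lam x) (i : Fin d)
    (j : Fin (σ.n i)) : σ.Fmap T p x i j = lam ^ (p i / (p i - 1) - 1) * x i j := by
  have hlam := h.eigenvalue_nonneg hT hx (hp i)
  rw [Fmap_eq_mul_iff hT hx (hp i).ne' j (Real.rpow_nonneg hlam _), h.2,
    psi_apply_of_nonneg (hp i).ne' (hx i), div_sub_one_sub_one_eq_inv (hp i).ne',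
    Real.rpow_inv_rpow hlam (sub_ne_zero.mpr (hp i).ne')]

theorem exists_isEigenpair_iff_exists_Fmap_eq (hT : ∀ J, 0 ≤ T J) (hp : ∀ i, 1 < p i)
    (hx : ∀ i j, 0 ≤ x i j) (hn : ∀ i, pnorm (p i) (x i) = 1) :
    (∃ lam, σ.IsEigenpair T p lam x) ↔
      ∃ θ : Fin d → ℝ, (∀ i, 0 ≤ θ i) ∧ ∀ i j, σ.Fmap T p x i j = θ i * x i j := by
  constructor
  · rintro ⟨lam, h⟩
    exact ⟨fun i => lam ^ (p i / (p i - 1) - 1),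
      fun i => Real.rpow_nonneg (h.eigenvalue_nonneg hT hx (hp i)) _,
      Fmap_eq_of_isEigenpair hT hp hx h⟩
  · rintro ⟨θ, hθ, hF⟩
    obtain ⟨lam, -, -, h⟩ := exists_isEigenpair_of_Fmap_eq hT hp hx hn hθ hF
    exact ⟨lam, h⟩

end ShapePartition

theorem eigenpair_iff_multihomogeneous_fixed_point_general
    {m d : ℕ} {N : Fin m → ℕ}
    (T : (∀ k, Fin (N k)) → ℝ) (hT : ∀ J, 0 ≤ T J)
    (σ : ShapePartition m d N) (p : Fin d → ℝ) (hp : ∀ i, 1 < p i)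
    (x : ∀ i, Fin (σ.n i) → ℝ) (hx : ∀ i j, 0 ≤ x i j) (hxnz : ∀ i, x i ≠ 0) :
    ((∃ lam : ℝ, σ.IsEigenpair T p lam (fun i j => x i j / pnorm (p i) (x i))) ↔
      (∃ θ : Fin d → ℝ, (∀ i, 0 ≤ θ i) ∧ ∀ i j, σ.Fmap T p x i j = θ i * x i j)) ∧
    ((∀ i, pnorm (p i) (x i) = 1) →
      ((∀ θ : Fin d → ℝ, (∀ i, 0 ≤ θ i) → (∀ i j, σ.Fmap T p x i j = θ i * x i j) →
          ∃ lam : ℝ, 0 ≤ lam ∧ (∀ i, θ i = lam ^ (p i / (p i - 1) - 1)) ∧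
            σ.IsEigenpair T p lam x) ∧
        (∀ lam : ℝ, σ.IsEigenpair T p lam x →
          ∀ i j, σ.Fmap T p x i j = lam ^ (p i / (p i - 1) - 1) * x i j))) := by
  have hc i : 0 < pnorm (p i) (x i) := pnorm_pos (hxnz i)
  set y : ∀ i, Fin (σ.n i) → ℝ := fun i j => x i j / pnorm (p i) (x i)
  have hy i j : 0 ≤ y i j := div_nonneg (hx i j) (hc i).le
  have hxy : x = fun i j => pnorm (p i) (x i) * y i j := by
    funext i j
    exact (mul_div_cancel₀ _ (hc i).ne').symm
  refine ⟨?_, fun hn => ⟨fun θ => σ.exists_isEigenpair_of_Fmap_eq hT hp hx hn,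
    fun lam h => σ.Fmap_eq_of_isEigenpair hT hp hx h⟩⟩
  rw [σ.exists_isEigenpair_iff_exists_Fmap_eq hT hp hy
    fun i => pnorm_div_pnorm (zero_lt_one.trans (hp i)).ne' (hxnz i)]
  refine (exists_nonneg_eq_mul_iff_of_rescale
    (a := fun i => (∏ l ∈ Finset.univ.erase (σ.rep i), pnorm (p (σ.β l)) (x (σ.β l))) ^
      (p i / (p i - 1) - 1))
    (fun i => ?_) hc (fun i j => ?_) (fun i j => congrFun₂ hxy i j)).symm
  · exact Real.rpow_pos_of_pos (Finset.prod_pos fun l _ => hc _) _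
  · conv_lhs => rw [hxy]
    exact σ.Fmap_smul hT (fun i => (hc i).le) hy i j

/-- correspondence between `(σ,p)`-eigenvectors of `T` and
multi-homogeneous eigenvectors of `F^{(σ,p)}` (Lemma 5.1 of the paper). -/
theorem eigenpair_iff_multihomogeneous_fixed_point
    {m d : ℕ} (hm : 0 < m) {N : Fin m → ℕ} (hN : ∀ k, 0 < N k)
    (T : (∀ k, Fin (N k)) → ℝ) (hT : ∀ J, 0 ≤ T J)
    (σ : ShapePartition m d N) (p : Fin d → ℝ) (hp : ∀ i, 1 < p i)
    (x : ∀ i, Fin (σ.n i) → ℝ) (hx : ∀ i j, 0 ≤ x i j) (hxnz : ∀ i, x i ≠ 0) :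
    ((∃ lam : ℝ, σ.IsEigenpair T p lam (fun i j => x i j / pnorm (p i) (x i))) ↔
      (∃ θ : Fin d → ℝ, (∀ i, 0 ≤ θ i) ∧ ∀ i j, σ.Fmap T p x i j = θ i * x i j)) ∧
    ((∀ i, pnorm (p i) (x i) = 1) →
      ((∀ θ : Fin d → ℝ, (∀ i, 0 ≤ θ i) → (∀ i j, σ.Fmap T p x i j = θ i * x i j) →
          ∃ lam : ℝ, 0 ≤ lam ∧ (∀ i, θ i = lam ^ (p i / (p i - 1) - 1)) ∧
            σ.IsEigenpair T p lam x) ∧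
        (∀ lam : ℝ, σ.IsEigenpair T p lam x →
          ∀ i j, σ.Fmap T p x i j = lam ^ (p i / (p i - 1) - 1) * x i j))) :=
  eigenpair_iff_multihomogeneous_fixed_point_general T hT σ p hp x hx hxnz

end TensorPF
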